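/- arXiv:2109.00409 — 6 statements merged into one kernel-verified Lean document; each statement's English description precedes it below -/
import Mathlib

section
/- Let G ∈ 𝒢_n^m with strong-component vertex set S, and let 0 ≤ α < 1. Let M_S be the principal submatrix of A_α(G) with rows and columns indexed by S (its diagonal entries are α·d⁺(v), where d⁺ is the outdegree in all of G). Then the characteristic polynomial of A_α(G) factors as charpoly(A_α(G)) = charpoly(M_S) · ∏_{v∈V∖S} (X − α·d⁺(v)). In particular, for each vertex v not in S, α·d⁺(v) is an eigenvalue of A_α(G), and the remaining m eigenvalues of A_α(G) are exactly the eigenvalues of M_S. -/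
open Polynomial Matrix Finset

/-- The outdegree of a vertex `v` of the digraph with adjacency matrix `A`. -/
noncomputable def outdeg {V : Type*} [Fintype V] (A : Matrix V V ℝ) (v : V) : ℝ := ∑ w, A v w

/-- The `A_α`-matrix `α·D⁺ + (1-α)·A` of a digraph with adjacency matrix `A`. -/
noncomputable def Aalpha {V : Type*} [Fintype V] [DecidableEq V] (α : ℝ) (A : Matrix V V ℝ) :
    Matrix V V ℝ :=
  α • Matrix.diagonal (outdeg A) + (1 - α) • A

/-- The spectral radius of a real square matrix: the maximum modulus of its complex
eigenvalues (roots of the characteristic polynomial over `ℂ`). -/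
noncomputable def specRad {V : Type*} [Fintype V] [DecidableEq V] (M : Matrix V V ℝ) : ℝ :=
  sSup {x : ℝ | ∃ z : ℂ, (M.map ((↑) : ℝ → ℂ)).charpoly.IsRoot z ∧ ‖z‖ = x}

/-- The `A_α` energy of a digraph: the sum of the squares of the eigenvalues of its
`A_α`-matrix, equivalently `trace (A_α(G)²)`. -/
noncomputable def Ealpha {V : Type*} [Fintype V] [DecidableEq V] (α : ℝ) (A : Matrix V V ℝ) : ℝ :=
  Matrix.trace (Aalpha α A * Aalpha α A)

/-- The outdegree of `s` within the vertex set `S` (the within-`S` outdegree `d*(s)`). -/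
noncomputable def dStar {V : Type*} [Fintype V] (A : Matrix V V ℝ) (S : Finset V) (s : V) : ℝ :=
  ∑ v ∈ S, A s v

/-- The size `n_s` of the fiber `r⁻¹(s)`. -/
def fibCard {V : Type*} [Fintype V] [DecidableEq V] (r : V → V) (s : V) : ℕ :=
  (Finset.univ.filter (fun v => r v = s)).card

/-- The underlying undirected graph of the induced subdigraph on the fiber `r⁻¹(s)`. -/
def fiberGraph {V : Type*} (A : Matrix V V ℝ) (r : V → V) (s : V) :
    SimpleGraph {v : V // r v = s} where
  Adj u w := u ≠ w ∧ (A u.1 w.1 = 1 ∨ A w.1 u.1 = 1)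
  symm := ⟨fun _ _ h => ⟨h.1.symm, h.2.symm⟩⟩
  loopless := ⟨fun _ h => h.1 rfl⟩

/-- The principal submatrix of `A` with rows and columns indexed by `S`. -/
def subm {V : Type*} (A : Matrix V V ℝ) (S : Finset V) :
    Matrix {v : V // v ∈ S} {v : V // v ∈ S} ℝ :=
  A.submatrix (fun x => x.1) (fun x => x.1)

/-- `c₂(G*) = trace(A*²)`, the number of closed walks of length 2 in the strong component. -/
noncomputable def c2star {V : Type*} [Fintype V] [DecidableEq V] (A : Matrix V V ℝ)
    (S : Finset V) : ℝ :=
  Matrix.trace (subm A S * subm A S)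

/-- Membership in the class `𝒢_n^m`: `A` is the adjacency matrix of a digraph of order `n`
with a unique strong component on the vertex set `S` of order `m`, with a directed tree
(the fiber `r⁻¹(s)`) hung on each vertex `s ∈ S`. -/
structure IsGnm {V : Type*} [Fintype V] [DecidableEq V] (A : Matrix V V ℝ) (S : Finset V)
    (r : V → V) (n m : ℕ) : Prop where
  zero_one : ∀ u v, A u v = 0 ∨ A u v = 1
  loopless : ∀ v, A v v = 0
  card_V : Fintype.card V = n
  card_S : S.card = m
  two_le_m : 2 ≤ m
  m_lt_n : m < n
  strong : ∀ u ∈ S, ∀ v ∈ S, Relation.ReflTransGen (fun a b => a ∈ S ∧ b ∈ S ∧ A a b = 1) u v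
  r_mem : ∀ v, r v ∈ S
  r_fix : ∀ s ∈ S, r s = s
  arc_cases : ∀ u v, A u v = 1 → (u ∈ S ∧ v ∈ S) ∨ r u = r v
  fiber_no_symm : ∀ u v, r u = r v → A u v = 1 → A v u = 0
  fiber_tree : ∀ s ∈ S, (fiberGraph A r s).IsTree

/-- Every hung tree is an in-tree with root at its vertex of `S`: inside each fiber the
root has outdegree `0` and every other vertex has outdegree `1`. -/
def InTrees {V : Type*} [Fintype V] [DecidableEq V] (A : Matrix V V ℝ) (S : Finset V)
    (r : V → V) : Prop :=
  (∀ v, v ∉ S → (∑ w ∈ Finset.univ.filter (fun w => r w = r v), A v w) = 1) ∧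
  (∀ s ∈ S, (∑ w ∈ Finset.univ.filter (fun w => r w = s), A s w) = 0)

/-- All hung trees are trivial except the one at `v`, which is an out-star with centre `v`. -/
def OutStarAt {V : Type*} [Fintype V] [DecidableEq V] (A : Matrix V V ℝ) (S : Finset V)
    (r : V → V) (v : V) : Prop :=
  (∀ s ∈ S, s ≠ v → fibCard r s = 1) ∧ (∀ u w, r u = v → A u w = 1 → u = v)


/-!
Every arc of `G` not inside `S` joins two vertices of one hung tree, and an orientation of a tree
without symmetric pairs has no directed cycle. Hence the vertices can be given integer levels,
with `S` as the single level `0`, so that these arcs strictly raise the level and no arc joins two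
distinct vertices of one nonzero level. Then `A_α(G)` is block triangular: one block is the
principal submatrix on `S` and every other block is diagonal, with entries `α·d⁺(v)`.
-/

open Relation

theorem SimpleGraph.IsAcyclic.not_transGen_self {α : Type*} {G : SimpleGraph α}
    (hG : G.IsAcyclic) {R : α → α → Prop} (hRG : ∀ a b, R a b → G.Adj a b)
    (hR : ∀ a b, R a b → ¬R b a) (a : α) : ¬TransGen R a a := by
  rw [TransGen.head'_iff]
  rintro ⟨b, hab, hba⟩
  refine SimpleGraph.isBridge_iff.1 (SimpleGraph.isAcyclic_iff_forall_adj_isBridge.1 hG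
    (hRG a b hab)) ?_
  -- An `R`-walk from `b` can cross the edge `ab` only as `a → b`, which just returns to `b`.
  suffices ∀ c, ReflTransGen R b c → (G.deleteEdges {s(a, b)}).Reachable b c from
    (this a hba).symm
  intro c hbc
  induction hbc with
  | refl => rfl
  | @tail c d _ hcd ih =>
    by_cases he : s(c, d) = s(a, b)
    · rcases Sym2.eq_iff.1 he with ⟨-, rfl⟩ | ⟨rfl, rfl⟩
      · rfl
      · exact (hR _ _ hab hcd).elim
    · exact ih.trans (SimpleGraph.Adj.reachable (by simpa [he] using hRG c d hcd))

theorem Relation.ReflTransGen.exists_subtype {α : Type*} {R : α → α → Prop} {p : α → Prop}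
    (hp : ∀ a b, R a b → p a → p b) {a b : α} (h : ReflTransGen R a b) (ha : p a) :
    ∃ hb : p b, ReflTransGen (fun x y : Subtype p => R x y) ⟨a, ha⟩ ⟨b, hb⟩ := by
  induction h with
  | refl => exact ⟨ha, .refl⟩
  | tail _ hbc ih =>
    obtain ⟨hb, h⟩ := ih
    exact ⟨hp _ _ hbc hb, h.tail hbc⟩

theorem Relation.ncard_setOf_reflTransGen_lt {α : Type*} [Finite α] {R : α → α → Prop}
    (hR : ∀ a, ¬TransGen R a a) {a b : α} (hab : R a b) :
    {x | ReflTransGen R b x}.ncard < {x | ReflTransGen R a x}.ncard :=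
  Set.ncard_lt_ncard <| (Set.ssubset_iff_of_subset fun _ hx => ReflTransGen.head hab hx).2
    ⟨a, .refl, fun hba => hR a (TransGen.head' hab hba)⟩

theorem Matrix.charpoly_eq_charpoly_submatrix_mul_prod {R n α : Type*} [CommRing R]
    [Fintype n] [DecidableEq n] [LinearOrder α] (M : Matrix n n R) (S : Finset n) (b : n → α)
    (a₀ : α) (hb : ∀ i, b i = a₀ ↔ i ∈ S) (hM : M.BlockTriangular b)
    (hdiag : ∀ i ∉ S, ∀ j, i ≠ j → b i = b j → M i j = 0) :
    M.charpoly = (M.submatrix ((↑) : S → n) (↑)).charpoly * ∏ i ∈ Sᶜ, (X - C (M i i)) := by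
  classical
  set T := (univ.image b).erase a₀
  have hblock₀ : (M.toSquareBlock b a₀).charpoly = (M.submatrix ((↑) : S → n) (↑)).charpoly := by
    rw [← charpoly_reindex (Equiv.subtypeEquivRight hb)]
    rfl
  have hblock : ∀ a ∈ T, (M.toSquareBlock b a).charpoly =
      ∏ i ∈ Sᶜ with b i = a, (X - C (M i i)) := by
    intro a ha
    have ha₀ : a ≠ a₀ := (mem_erase.1 ha).1
    have hdiagonal : M.toSquareBlock b a = diagonal fun i : {i // b i = a} => M i i := by
      ext i j
      by_cases hij : i = j
      · subst hij; simp [toSquareBlock_def]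
      · rw [diagonal_apply_ne _ hij, toSquareBlock_def]
        exact hdiag i (fun hi => ha₀ (i.2 ▸ (hb i).2 hi)) j (Subtype.coe_ne_coe.2 hij)
          (i.2.trans j.2.symm)
    rw [hdiagonal, charpoly_diagonal]
    refine (prod_subtype _ (fun i => ?_) fun i => X - C (M i i)).symm
    simp only [mem_filter, mem_compl, and_iff_right_iff_imp]
    exact fun hi hiS => ha₀ (hi ▸ (hb i).2 hiS)
  have himage : ∏ a ∈ univ.image b, (M.toSquareBlock b a).charpoly =
      ∏ a ∈ insert a₀ T, (M.toSquareBlock b a).charpoly := by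
    refine prod_subset (insert_erase_subset a₀ _) fun a ha hnot => ?_
    obtain rfl : a = a₀ := by simpa [T, hnot] using ha
    have : IsEmpty {i // b i = a} := ⟨fun i => hnot (i.2 ▸ mem_image_of_mem b (mem_univ i.1))⟩
    exact charpoly_isEmpty
  rw [hM.charpoly, himage, prod_insert (notMem_erase a₀ _), hblock₀, prod_congr rfl hblock,
    prod_fiberwise_of_maps_to]
  exact fun i hi =>
    mem_erase.2 ⟨fun h => mem_compl.1 hi ((hb i).1 h), mem_image_of_mem b (mem_univ i)⟩

theorem Matrix.roots_charpoly_map_eq_of_charpoly_eq_mul_prod {R K n m ι : Type*} [CommRing R]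
    [CommRing K] [IsDomain K] [Fintype n] [DecidableEq n] [Fintype m] [DecidableEq m]
    (f : R →+* K) {M : Matrix n n R} {N : Matrix m m R} {s : Finset ι} {d : ι → R}
    (h : M.charpoly = N.charpoly * ∏ i ∈ s, (X - C (d i))) :
    (M.map f).charpoly.roots = (N.map f).charpoly.roots + s.val.map (f ∘ d) := by
  have hprod : (∏ i ∈ s, (X - C (f (d i)))) ≠ 0 :=
    (monic_prod_of_monic _ _ fun i _ => monic_X_sub_C _).ne_zero
  rw [charpoly_map, charpoly_map, h, Polynomial.map_mul, Polynomial.map_prod,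
    roots_mul (mul_ne_zero (N.charpoly_monic.map f).ne_zero (by simpa using hprod))]
  simp [roots_prod _ _ hprod]

def fiberArc {V : Type*} (A : Matrix V V ℝ) (r : V → V) (u w : V) : Prop :=
  A u w = 1 ∧ r u = r w

noncomputable def fiberReach {V : Type*} (A : Matrix V V ℝ) (r : V → V) (v : V) : ℕ :=
  {w | ReflTransGen (fiberArc A r) v w}.ncard

/-- `fiberReach` drops along tree arcs, so measuring it against the root `r v` places the tree
vertices that reach their root below `S` and those reached from it above; the value is odd, hence
never the level `0` of `S`. -/
noncomputable def level {V : Type*} [DecidableEq V] (A : Matrix V V ℝ) (S : Finset V)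
    (r : V → V) (v : V) : ℤ :=
  if v ∈ S then 0 else 2 * ((fiberReach A r (r v) : ℤ) - fiberReach A r v) + 1

theorem level_eq_zero_iff {V : Type*} [DecidableEq V] {A : Matrix V V ℝ} {S : Finset V}
    {r : V → V} {v : V} : level A S r v = 0 ↔ v ∈ S := by
  unfold level
  split_ifs <;> simp_all; omega

theorem Aalpha_apply_of_ne {V : Type*} [Fintype V] [DecidableEq V] (α : ℝ) (A : Matrix V V ℝ)
    {u w : V} (h : u ≠ w) : Aalpha α A u w = (1 - α) * A u w := by
  simp [Aalpha, diagonal_apply_ne _ h]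

theorem Aalpha_apply_self {V : Type*} [Fintype V] [DecidableEq V] (α : ℝ) {A : Matrix V V ℝ}
    {v : V} (hv : A v v = 0) : Aalpha α A v v = α * outdeg A v := by
  simp [Aalpha, hv]

namespace IsGnm

variable {V : Type*} [Fintype V] [DecidableEq V] {A : Matrix V V ℝ} {S : Finset V}
  {r : V → V} {n m : ℕ}

theorem not_transGen_fiberArc (hG : IsGnm A S r n m) (v : V) :
    ¬TransGen (fiberArc A r) v v := by
  rw [TransGen.head'_iff]
  rintro ⟨w, hvw, hwv⟩
  obtain ⟨hv, hwv⟩ := hwv.exists_subtype (p := fun x => r x = r w)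
    (fun _ _ h hx => h.2.symm.trans hx) rfl
  refine SimpleGraph.IsAcyclic.not_transGen_self (hG.fiber_tree (r w) (hG.r_mem w)).isAcyclic
    (R := fun x y => fiberArc A r x y) (fun x y hxy => ⟨?_, Or.inl hxy.1⟩)
    (fun x y hxy hyx => ?_) ⟨v, hv⟩ (TransGen.head' hvw hwv)
  · rintro rfl
    simp [fiberArc, hG.loopless] at hxy
  · simp [fiberArc, hG.fiber_no_symm x y hxy.2 hxy.1] at hyx

theorem level_lt_of_arc (hG : IsGnm A S r n m) {u w : V} (huw : A u w = 1) :
    (u ∈ S ∧ w ∈ S) ∨ level A S r u < level A S r w := by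
  by_cases hS : u ∈ S ∧ w ∈ S
  · exact Or.inl hS
  right
  have hr : r u = r w := (hG.arc_cases u w huw).resolve_left hS
  have hlt : fiberReach A r w < fiberReach A r u :=
    ncard_setOf_reflTransGen_lt hG.not_transGen_fiberArc ⟨huw, hr⟩
  unfold level
  split_ifs with hu hw hw
  · exact (hS ⟨hu, hw⟩).elim
  · rw [← hr, hG.r_fix u hu]; omega
  · rw [hr, hG.r_fix w hw]; omega
  · rw [hr]; omega

theorem Aalpha_apply_eq_zero (hG : IsGnm A S r n m) (α : ℝ) {u w : V} (huw : u ≠ w)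
    (h : ¬((u ∈ S ∧ w ∈ S) ∨ level A S r u < level A S r w)) : Aalpha α A u w = 0 := by
  rw [Aalpha_apply_of_ne α A huw]
  rcases hG.zero_one u w with h0 | h1
  · simp [h0]
  · exact (h (hG.level_lt_of_arc h1)).elim

theorem blockTriangular_Aalpha (hG : IsGnm A S r n m) (α : ℝ) :
    (Aalpha α A).BlockTriangular (level A S r) := by
  intro u w hwu
  refine hG.Aalpha_apply_eq_zero α (by rintro rfl; exact lt_irrefl _ hwu) ?_
  rintro (⟨hu, hw⟩ | huw)
  · simp [level_eq_zero_iff.2 hu, level_eq_zero_iff.2 hw] at hwu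
  · exact lt_asymm hwu huw

theorem charpoly_Aalpha (hG : IsGnm A S r n m) (α : ℝ) :
    (Aalpha α A).charpoly =
      (subm (Aalpha α A) S).charpoly * ∏ v ∈ Sᶜ, (X - C (α * outdeg A v)) := by
  rw [(Aalpha α A).charpoly_eq_charpoly_submatrix_mul_prod S (level A S r) 0
    (fun _ => level_eq_zero_iff) (hG.blockTriangular_Aalpha α)
    fun u hu w huw hlevel => hG.Aalpha_apply_eq_zero α huw fun h => ?_]
  · simp only [Aalpha_apply_self α (hG.loopless _)]
    rfl
  · rcases h with ⟨hu', -⟩ | hlt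
    · exact hu hu'
    · exact hlt.ne hlevel

end IsGnm

theorem stmt0_general {V : Type*} [Fintype V] [DecidableEq V] (A : Matrix V V ℝ) (S : Finset V)
    (r : V → V) (n m : ℕ) (hG : IsGnm A S r n m) (α : ℝ) :
    (Aalpha α A).charpoly =
        (subm (Aalpha α A) S).charpoly * ∏ v ∈ Sᶜ, (X - C (α * outdeg A v)) ∧
    ((Aalpha α A).map ((↑) : ℝ → ℂ)).charpoly.roots =
        ((subm (Aalpha α A) S).map ((↑) : ℝ → ℂ)).charpoly.roots
          + Sᶜ.val.map (fun v => ((α * outdeg A v : ℝ) : ℂ)) ∧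
    ∀ v ∉ S, ((Aalpha α A).map ((↑) : ℝ → ℂ)).charpoly.IsRoot ((α * outdeg A v : ℝ) : ℂ) := by
  have hfactor := hG.charpoly_Aalpha α
  have hroots := roots_charpoly_map_eq_of_charpoly_eq_mul_prod Complex.ofRealHom hfactor
  refine ⟨hfactor, hroots, fun v hv => isRoot_of_mem_roots ?_⟩
  rw [show ((↑) : ℝ → ℂ) = Complex.ofRealHom from rfl, hroots]
  exact Multiset.mem_add.2 (Or.inr (Multiset.mem_map_of_mem _ (mem_compl.2 hv)))

/-- For `G ∈ 𝒢_n^m`, the characteristic polynomial of `A_α(G)` factors as the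
characteristic polynomial of the principal submatrix on `S` times `∏_{v ∉ S} (X - α·d⁺(v))`;
in particular each `α·d⁺(v)` with `v ∉ S` is an eigenvalue of `A_α(G)`, and the remaining
`m` eigenvalues are exactly those of the submatrix. -/
theorem stmt0 {V : Type*} [Fintype V] [DecidableEq V] (A : Matrix V V ℝ) (S : Finset V)
    (r : V → V) (n m : ℕ) (hG : IsGnm A S r n m) (α : ℝ) (hα0 : 0 ≤ α) (hα1 : α < 1) :
    (Aalpha α A).charpoly =
        (subm (Aalpha α A) S).charpoly * ∏ v ∈ Sᶜ, (X - C (α * outdeg A v)) ∧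
    ((Aalpha α A).map ((↑) : ℝ → ℂ)).charpoly.roots =
        ((subm (Aalpha α A) S).map ((↑) : ℝ → ℂ)).charpoly.roots
          + Sᶜ.val.map (fun v => ((α * outdeg A v : ℝ) : ℂ)) ∧
    ∀ v ∉ S, ((Aalpha α A).map ((↑) : ℝ → ℂ)).charpoly.IsRoot ((α * outdeg A v : ℝ) : ℂ) :=
  stmt0_general A S r n m hG α
end

section
/- For any digraph G on a finite vertex set V with |V| = n and any 0 ≤ α < 1, the A_α energy satisfies E_α(G) = Σ_{i=1}^n λ_{αi}² = α²·Σ_{v∈V}(d⁺(v))² + (1−α)²·c₂(G), where λ_{α1},…,λ_{αn} are the eigenvalues of A_α(G). -/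
open Polynomial Matrix Finset

/-
Over `ℂ`, the factorisation `t² - M² = -((t - M)(-t - M))` gives
`χ_{M²}(t²) = (-1)ⁿ χ_M(t) χ_M(-t) = ∏ᵢ (t² - λᵢ²)`, and every `w ∈ ℂ` is a square `t²`,
so the eigenvalues of `M²` are the `λᵢ²` with multiplicity; hence `Σ λᵢ² = trace (M²)`.
Expanding `trace ((α D⁺ + (1 - α) A)²)`, the cross terms `trace (D⁺ A) = Σ_v d⁺(v) A v v`
vanish because `G` has no loops.
-/

namespace Matrix

variable {n R K : Type*} [Fintype n] [DecidableEq n]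

theorem eval_sq_charpoly_mul_self [CommRing R] (M : Matrix n n R) (z : R) :
    (M * M).charpoly.eval (z ^ 2) =
      (-1) ^ Fintype.card n * (M.charpoly.eval z * M.charpoly.eval (-z)) := by
  have hfactor : scalar n (z ^ 2) - M * M = -((scalar n z - M) * (scalar n (-z) - M)) := by
    simp only [sq, map_mul, map_neg, mul_sub, sub_mul, mul_neg,
      (scalar_commute z (Commute.all z) M).eq]
    abel
  rw [eval_charpoly, eval_charpoly, eval_charpoly, hfactor, det_neg, det_mul]

theorem roots_charpoly_mul_self [Field K] [IsAlgClosed K] (M : Matrix n n K) :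
    (M * M).charpoly.roots = M.charpoly.roots.map (· ^ 2) := by
  set s := M.charpoly.roots
  have hsplit : M.charpoly = (s.map fun a => X - C a).prod :=
    (IsAlgClosed.splits _).eq_prod_roots_of_monic (charpoly_monic M)
  have hcard : Multiset.card s = Fintype.card n := by
    rw [splits_iff_card_roots.mp (IsAlgClosed.splits _), charpoly_natDegree_eq_dim]
  suffices (M * M).charpoly = ((s.map (· ^ 2)).map fun a => X - C a).prod by
    rw [this, roots_multiset_prod_X_sub_C]
  refine Polynomial.funext fun w => ?_
  obtain ⟨z, rfl⟩ := IsAlgClosed.exists_pow_nat_eq w two_pos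
  rw [eval_sq_charpoly_mul_self, hsplit, ← hcard, ← Multiset.prod_replicate,
    ← Multiset.map_const', eval_multiset_prod, eval_multiset_prod, eval_multiset_prod,
    Multiset.map_map, Multiset.map_map, Multiset.map_map, Multiset.map_map,
    ← Multiset.prod_map_mul, ← Multiset.prod_map_mul]
  congr 1
  refine Multiset.map_congr rfl fun a _ => ?_
  simp only [Function.comp_apply, eval_sub, eval_X, eval_C]
  ring

theorem sum_sq_roots_charpoly [Field K] [IsAlgClosed K] (M : Matrix n n K) :
    (M.charpoly.roots.map (· ^ 2)).sum = trace (M * M) := by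
  rw [trace_eq_sum_roots_charpoly, roots_charpoly_mul_self]

theorem trace_mul_self_smul_diagonal_add_smul [CommRing R] (a b : R) (d : n → R)
    (A : Matrix n n R) (hA : ∀ i, A i i = 0) :
    trace ((a • diagonal d + b • A) * (a • diagonal d + b • A)) =
      a ^ 2 * ∑ i, d i ^ 2 + b ^ 2 * trace (A * A) := by
  have hDA : trace (diagonal d * A) = 0 := by simp [trace, hA]
  have hAD : trace (A * diagonal d) = 0 := by rw [trace_mul_comm, hDA]
  simp only [add_mul, mul_add, smul_mul, Matrix.mul_smul, trace_add, trace_smul, hDA, hAD,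
    diagonal_mul_diagonal, trace_diagonal, smul_eq_mul, mul_zero, add_zero, zero_add, mul_sum]
  ring_nf

end Matrix

theorem stmt5_general {V : Type*} [Fintype V] [DecidableEq V] (A : Matrix V V ℝ)
    (hloop : ∀ v, A v v = 0)
    (α : ℝ) :
    (((Aalpha α A).map ((↑) : ℝ → ℂ)).charpoly.roots.map (fun z => z ^ 2)).sum =
        ((Ealpha α A : ℝ) : ℂ) ∧
    Ealpha α A = α ^ 2 * ∑ v, (outdeg A v) ^ 2 + (1 - α) ^ 2 * Matrix.trace (A * A) := by
  refine ⟨?_, trace_mul_self_smul_diagonal_add_smul _ _ _ _ hloop⟩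
  have hmap := AddMonoidHom.map_trace Complex.ofRealHom (Aalpha α A * Aalpha α A)
  rw [Matrix.map_mul] at hmap
  rw [sum_sq_roots_charpoly, Ealpha]
  exact hmap.symm

/-- For any digraph `G`, `E_α(G) = Σᵢ λ_{αi}² = α²·Σ_v (d⁺(v))² + (1-α)²·c₂(G)`,
where the `λ_{αi}` are the eigenvalues of `A_α(G)` and `c₂(G) = trace(A(G)²)`. -/
theorem stmt5 {V : Type*} [Fintype V] [DecidableEq V] (A : Matrix V V ℝ)
    (h01 : ∀ u v, A u v = 0 ∨ A u v = 1) (hloop : ∀ v, A v v = 0)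
    (α : ℝ) (hα0 : 0 ≤ α) (hα1 : α < 1) :
    (((Aalpha α A).map ((↑) : ℝ → ℂ)).charpoly.roots.map (fun z => z ^ 2)).sum =
        ((Ealpha α A : ℝ) : ℂ) ∧
    Ealpha α A = α ^ 2 * ∑ v, (outdeg A v) ^ 2 + (1 - α) ^ 2 * Matrix.trace (A * A) :=
  stmt5_general A hloop α
end

section
/- Let G be a symmetric digraph, i.e., its adjacency matrix A(G) is a symmetric matrix, and let e = Σ_{u,v} A(G) u v be the number of arcs of G. Then for every 0 ≤ α < 1, E_α(G) = α²·Σ_{v}(d⁺(v))² + (1−α)²·e. -/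
open Polynomial Matrix Finset

/-! Expand `trace ((α D⁺ + (1-α) A)²)`. The cross term `trace (D⁺ A) = Σ_v d⁺(v) A_vv` vanishes
because `G` is loopless, and for a symmetric 0/1 matrix `trace (A²) = Σ A_uv A_vu = Σ A_uv² = e`. -/

namespace Matrix

variable {V R : Type*} [Fintype V]

theorem trace_smul_add_smul_mul_self [CommRing R] (a b : R) (M N : Matrix V V R) :
    trace ((a • M + b • N) * (a • M + b • N)) =
      a ^ 2 * trace (M * M) + 2 * a * b * trace (M * N) + b ^ 2 * trace (N * N) := by
  have hNM : trace (N * M) = trace (M * N) := trace_mul_comm N M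
  simp only [add_mul, mul_add, smul_mul_smul_comm, trace_add, trace_smul, smul_eq_mul, hNM]
  ring

theorem trace_diagonal_mul_of_diag_eq_zero [DecidableEq V] [NonUnitalNonAssocSemiring R]
    (d : V → R) {A : Matrix V V R} (hA : ∀ v, A v v = 0) : trace (diagonal d * A) = 0 := by
  simp [trace, diagonal_mul, hA]

theorem trace_mul_self_of_symm_of_zero_one [NonAssocSemiring R] {A : Matrix V V R}
    (h01 : ∀ u v, A u v = 0 ∨ A u v = 1) (hsymm : ∀ u v, A u v = A v u) :
    trace (A * A) = ∑ u, ∑ v, A u v := by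
  refine Finset.sum_congr rfl fun u _ => Finset.sum_congr rfl fun v _ => ?_
  change A u v * A v u = A u v
  rw [← hsymm u v]
  rcases h01 u v with h | h <;> simp [h]

end Matrix

theorem stmt7_general {V : Type*} [Fintype V] [DecidableEq V] (A : Matrix V V ℝ)
    (h01 : ∀ u v, A u v = 0 ∨ A u v = 1) (hloop : ∀ v, A v v = 0)
    (hsymm : ∀ u v, A u v = A v u)
    (α : ℝ) :
    Ealpha α A = α ^ 2 * ∑ v, (outdeg A v) ^ 2 + (1 - α) ^ 2 * ∑ u, ∑ v, A u v := by
  rw [Ealpha, Aalpha, trace_smul_add_smul_mul_self, trace_diagonal_mul_of_diag_eq_zero _ hloop,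
    trace_mul_self_of_symm_of_zero_one h01 hsymm, diagonal_mul_diagonal, trace_diagonal]
  simp only [sq, mul_zero, add_zero]

/-- If the digraph `G` is symmetric (its adjacency matrix is symmetric) and has `e` arcs,
then `E_α(G) = α²·Σ_v (d⁺(v))² + (1-α)²·e`. -/
theorem stmt7 {V : Type*} [Fintype V] [DecidableEq V] (A : Matrix V V ℝ)
    (h01 : ∀ u v, A u v = 0 ∨ A u v = 1) (hloop : ∀ v, A v v = 0)
    (hsymm : ∀ u v, A u v = A v u)
    (α : ℝ) (hα0 : 0 ≤ α) (hα1 : α < 1) :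
    Ealpha α A = α ^ 2 * ∑ v, (outdeg A v) ^ 2 + (1 - α) ^ 2 * ∑ u, ∑ v, A u v :=
  stmt7_general A h01 hloop hsymm α
end

section
/- Let T be a directed tree on n vertices and let 0 ≤ α < 1. Then α²(n−1) ≤ E_α(T) ≤ α²(n−1)². Moreover, if 0 < α < 1, then E_α(T) = α²(n−1) if and only if T is an in-tree (every vertex has outdegree at most 1), and E_α(T) = α²(n−1)² if and only if T is an out-star (some vertex has outdegree n−1 and all other vertices have outdegree 0). -/
open Polynomial Matrix Finset

/-- The underlying undirected graph of a digraph: `u ~ w` iff `(u,w)` or `(w,u)` is an arc. -/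
def underGraph {V : Type*} (A : Matrix V V ℝ) : SimpleGraph V where
  Adj u w := u ≠ w ∧ (A u w = 1 ∨ A w u = 1)
  symm := ⟨fun _ _ h => ⟨h.1.symm, h.2.symm⟩⟩
  loopless := ⟨fun _ h => h.1 rfl⟩

/-!
A directed tree has no loops and no pair of opposite arcs, so the off-diagonal terms of
`trace (A_α²)` vanish and `E_α(T) = α² ∑ d⁺(v)²`. The outdegrees are natural numbers whose sum
counts the arcs, i.e. the `n - 1` edges of the underlying tree. For naturals with sum `m` one has
`m ≤ ∑ d² ≤ m²`, with equality on the left iff every `d ≤ 1`, and on the right iff a single `d`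
carries the whole sum.
-/

namespace Nat

variable {ι : Type*}

lemma sum_le_sum_sq (s : Finset ι) (f : ι → ℕ) : ∑ i ∈ s, f i ≤ ∑ i ∈ s, f i ^ 2 :=
  sum_le_sum fun i _ => le_self_pow two_ne_zero (f i)

lemma sum_sq_eq_sum_iff (s : Finset ι) (f : ι → ℕ) :
    ∑ i ∈ s, f i ^ 2 = ∑ i ∈ s, f i ↔ ∀ i ∈ s, f i ≤ 1 := by
  rw [eq_comm, sum_eq_sum_iff_of_le fun i _ => le_self_pow two_ne_zero (f i)]
  refine forall₂_congr fun i _ => ⟨fun h => ?_, fun h => ?_⟩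
  · nlinarith
  · interval_cases f i <;> rfl

/-- Equality forces `f i ^ 2 = f i * ∑ f` for every `i`, so each value is `0` or the whole sum. -/
lemma sum_sq_eq_sq_sum_iff [Fintype ι] [Nonempty ι] (f : ι → ℕ) :
    ∑ i, f i ^ 2 = (∑ i, f i) ^ 2 ↔ ∃ c, f c = ∑ i, f i ∧ ∀ i ≠ c, f i = 0 := by
  classical
  set S := ∑ i, f i
  constructor
  · intro h
    have hle : ∀ i ∈ univ, f i ^ 2 ≤ f i * S := fun i hi => by
      rw [sq]
      exact Nat.mul_le_mul_left _ (single_le_sum (fun _ _ => zero_le _) hi)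
    rw [sq S, sum_mul, sum_eq_sum_iff_of_le hle] at h
    have hdich : ∀ i, f i = 0 ∨ f i = S := fun i => by
      have := h i (mem_univ i)
      rw [sq] at this
      exact (mul_eq_mul_left_iff.mp this).symm
    obtain ⟨c, hc⟩ : ∃ c, f c = S := by
      by_contra! hne
      have hS : S = 0 := sum_eq_zero fun i _ => (hdich i).resolve_right (hne i)
      obtain ⟨c⟩ := ‹Nonempty ι›
      exact hne c (by rw [hS]; exact (hdich c).resolve_right (hne c))
    refine ⟨c, hc, fun i hi => ?_⟩
    have : f i + f c ≤ S := by
      rw [← sum_pair hi]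
      exact sum_le_sum_of_subset (subset_univ _)
    omega
  · rintro ⟨c, hc, hzero⟩
    rw [sum_eq_single_of_mem c (mem_univ c) fun i _ hi => by rw [hzero i hi, zero_pow two_ne_zero],
      hc]

end Nat

section Digraph

variable {V : Type*} [Fintype V] {A : Matrix V V ℝ}

lemma outdeg_eq_card_filter (h01 : ∀ u v, A u v = 0 ∨ A u v = 1) (v : V) :
    outdeg A v = #{w | A v w = 1} := by
  rw [outdeg, card_filter]
  push_cast
  exact sum_congr rfl fun w _ => by rcases h01 v w with h | h <;> simp [h]

lemma Ealpha_eq_sq_mul_sum_outdeg_sq [DecidableEq V] (hasym : ∀ u v, A u v * A v u = 0)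
    (α : ℝ) : Ealpha α A = α ^ 2 * ∑ v, outdeg A v ^ 2 := by
  have hloop : ∀ v, A v v = 0 := fun v => mul_self_eq_zero.mp (hasym v v)
  have hdiag : ∀ v, Aalpha α A v v = α * outdeg A v := fun v => by simp [Aalpha, hloop]
  have hoff : ∀ u v, u ≠ v → Aalpha α A u v * Aalpha α A v u = 0 := fun u v huv => by
    simp only [Aalpha, Matrix.add_apply, Matrix.smul_apply, diagonal_apply_ne _ huv,
      diagonal_apply_ne _ huv.symm, smul_eq_mul, mul_zero, zero_add]
    linear_combination (1 - α) ^ 2 * hasym u v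
  rw [Ealpha, trace, mul_sum]
  refine sum_congr rfl fun v _ => ?_
  rw [diag_apply, mul_apply,
    sum_eq_single_of_mem v (mem_univ v) fun u _ huv => hoff v u huv.symm, hdiag]
  ring

lemma sum_card_arcs_eq_card_edgeFinset (hnosymm : ∀ u v, A u v = 1 → A v u = 0)
    [DecidableRel (underGraph A).Adj] :
    ∑ v, #{w | A v w = 1} = #(underGraph A).edgeFinset := by
  have harcs : ∑ v, #{w | A v w = 1} = #{p : V × V | A p.1 p.2 = 1} := by
    simp only [card_filter, Fintype.sum_prod_type]
  have hloop : ∀ v, A v v ≠ 1 := fun v h => by simpa [h] using hnosymm v v h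
  rw [harcs]
  refine card_bij (fun p _ => s(p.1, p.2)) (fun ⟨u, w⟩ huw => ?_) (fun p hp q hq hpq => ?_) ?_
  · rw [mem_filter] at huw
    exact SimpleGraph.mem_edgeFinset.mpr ⟨fun h => hloop w (by simp_all), Or.inl huw.2⟩
  · simp only [mem_filter, mem_univ, true_and] at hp hq
    rcases Sym2.eq_iff.mp hpq with ⟨h1, h2⟩ | ⟨h1, h2⟩
    · exact Prod.ext h1 h2
    · rw [← h1, ← h2, hnosymm _ _ hp] at hq
      exact absurd hq zero_ne_one
  · intro e he
    induction e with
    | h u w =>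
      obtain ⟨-, huw | hwu⟩ := SimpleGraph.mem_edgeFinset.mp he
      · exact ⟨(u, w), by simpa using huw, rfl⟩
      · exact ⟨(w, u), by simpa using hwu, Sym2.eq_swap⟩

end Digraph

theorem stmt8_general {V : Type*} [Fintype V] [DecidableEq V] (A : Matrix V V ℝ)
    (h01 : ∀ u v, A u v = 0 ∨ A u v = 1)
    (hnosymm : ∀ u v, A u v = 1 → A v u = 0)
    (htree : (underGraph A).IsTree)
    (n : ℕ) (hn : Fintype.card V = n)
    (α : ℝ) :
    (α ^ 2 * ((n : ℝ) - 1) ≤ Ealpha α A ∧ Ealpha α A ≤ α ^ 2 * ((n : ℝ) - 1) ^ 2) ∧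
    (0 < α →
      ((Ealpha α A = α ^ 2 * ((n : ℝ) - 1) ↔ ∀ v, outdeg A v ≤ 1) ∧
       (Ealpha α A = α ^ 2 * ((n : ℝ) - 1) ^ 2 ↔
          ∃ c, outdeg A c = (n : ℝ) - 1 ∧ ∀ v, v ≠ c → outdeg A v = 0))) := by
  classical
  set d : V → ℕ := fun v => #{w | A v w = 1}
  have hd : ∀ v, outdeg A v = d v := outdeg_eq_card_filter h01
  have hasym : ∀ u v, A u v * A v u = 0 := fun u v =>
    (h01 u v).elim (fun h => by rw [h, zero_mul]) (fun h => by rw [hnosymm u v h, mul_zero])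
  have hE : Ealpha α A = α ^ 2 * ((∑ v, d v ^ 2 : ℕ) : ℝ) := by
    rw [Ealpha_eq_sq_mul_sum_outdeg_sq hasym]
    push_cast
    simp only [hd]
  have hm : (n : ℝ) - 1 = ((∑ v, d v : ℕ) : ℝ) := by
    rw [sum_card_arcs_eq_card_edgeFinset hnosymm, ← hn, ← htree.card_edgeFinset]
    push_cast
    ring
  have : Nonempty V := htree.connected.nonempty
  have hα2 : 0 ≤ α ^ 2 := sq_nonneg α
  simp only [hE, hm, hd]
  refine ⟨⟨?_, ?_⟩, fun hα => ⟨?_, ?_⟩⟩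
  · exact mul_le_mul_of_nonneg_left (mod_cast Nat.sum_le_sum_sq univ d) hα2
  · exact mul_le_mul_of_nonneg_left
      (mod_cast sum_sq_le_sq_sum_of_nonneg fun v _ => Nat.zero_le (d v)) hα2
  · rw [mul_right_inj' (pow_ne_zero 2 hα.ne'), Nat.cast_inj, Nat.sum_sq_eq_sum_iff]
    simp [Nat.cast_le_one]
  · rw [mul_right_inj' (pow_ne_zero 2 hα.ne'), ← Nat.cast_pow, Nat.cast_inj,
      Nat.sum_sq_eq_sq_sum_iff]
    simp only [Nat.cast_inj, Nat.cast_eq_zero]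

/-- For a directed tree `T` on `n` vertices and `0 ≤ α < 1`,
`α²(n-1) ≤ E_α(T) ≤ α²(n-1)²`; for `0 < α < 1` the lower bound is attained exactly by
in-trees (every outdegree at most `1`) and the upper bound exactly by out-stars. -/
theorem stmt8 {V : Type*} [Fintype V] [DecidableEq V] (A : Matrix V V ℝ)
    (h01 : ∀ u v, A u v = 0 ∨ A u v = 1) (hloop : ∀ v, A v v = 0)
    (hnosymm : ∀ u v, A u v = 1 → A v u = 0)
    (htree : (underGraph A).IsTree)
    (n : ℕ) (hn : Fintype.card V = n)
    (α : ℝ) (hα0 : 0 ≤ α) (hα1 : α < 1) :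
    (α ^ 2 * ((n : ℝ) - 1) ≤ Ealpha α A ∧ Ealpha α A ≤ α ^ 2 * ((n : ℝ) - 1) ^ 2) ∧
    (0 < α →
      ((Ealpha α A = α ^ 2 * ((n : ℝ) - 1) ↔ ∀ v, outdeg A v ≤ 1) ∧
       (Ealpha α A = α ^ 2 * ((n : ℝ) - 1) ^ 2 ↔
          ∃ c, outdeg A c = (n : ℝ) - 1 ∧ ∀ v, v ≠ c → outdeg A v = 0))) :=
  stmt8_general A h01 hnosymm htree n hn α
end

section
/- Let G ∈ 𝒢_n^m with strong-component vertex set S, fiber sizes n_s, within-S outdegrees d*(s), and 0 ≤ α < 1. Then E_α(G) ≤ α²·Σ_{s∈S}(d*(s)+n_s−1)² + (1−α)²·c₂(G*) (the right-hand side being E_α(G'), where G' is obtained from G by replacing each hung tree by an out-star with centre s). Moreover, if 0 < α < 1, equality holds if and only if for every s ∈ S every arc of G inside the fiber r⁻¹(s) has tail s, i.e., each hung tree is an out-star with centre s. -/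
open Polynomial Matrix Finset

/-! Since `A` is loopless, `E_α = α² Σ_v d⁺(v)² + (1-α)² tr(A²)`, and every 2-cycle lies in `S`,
so `tr(A²) = c₂(G*)`. Arcs leaving a vertex outside `S` stay in its fiber, and the tree on the
fiber of `s` has `n_s - 1` arcs. So on that fiber the outdegrees are `x = d*(s) + g(s)` at `s` and
`g(v) ≥ 0` elsewhere (`g` the outdegree within the fiber), with `x + Σ g(v) = d*(s) + n_s - 1`.
Hence `Σ d⁺(v)² = x² + Σ g(v)² ≤ (x + Σ g(v))²`, with equality iff `g` vanishes off `s`, because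
`x ≥ d*(s) ≥ 1` by strong connectivity. -/

theorem sq_add_sum_sq_le_sq_add_sum {ι : Type*} (s : Finset ι) {x : ℝ} (hx : 0 ≤ x) {y : ι → ℝ}
    (hy : ∀ i ∈ s, 0 ≤ y i) : x ^ 2 + ∑ i ∈ s, y i ^ 2 ≤ (x + ∑ i ∈ s, y i) ^ 2 := by
  nlinarith [sum_sq_le_sq_sum_of_nonneg hy, sum_nonneg hy]

theorem sq_add_sum_sq_eq_sq_add_sum_iff {ι : Type*} (s : Finset ι) {x : ℝ} (hx : 0 < x)
    {y : ι → ℝ} (hy : ∀ i ∈ s, 0 ≤ y i) :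
    x ^ 2 + ∑ i ∈ s, y i ^ 2 = (x + ∑ i ∈ s, y i) ^ 2 ↔ ∀ i ∈ s, y i = 0 := by
  constructor
  · intro h
    have hsum : ∑ i ∈ s, y i = 0 := by
      nlinarith [sum_sq_le_sq_sum_of_nonneg hy, sum_nonneg hy]
    exact (sum_eq_zero_iff_of_nonneg hy).1 hsum
  · intro h
    have hsq : ∑ i ∈ s, y i ^ 2 = 0 := sum_eq_zero fun i hi => by rw [h i hi]; ring
    rw [sum_eq_zero h, hsq]
    ring

theorem Ealpha_eq_of_loopless {V : Type*} [Fintype V] [DecidableEq V] {A : Matrix V V ℝ}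
    (hloop : ∀ v, A v v = 0) (α : ℝ) :
    Ealpha α A = α ^ 2 * ∑ v, outdeg A v ^ 2 + (1 - α) ^ 2 * trace (A * A) := by
  have hDA : trace (diagonal (outdeg A) * A) = 0 := by simp [trace, hloop]
  have hAD : trace (A * diagonal (outdeg A)) = 0 := by simp [trace, hloop]
  simp only [Ealpha, Aalpha, add_mul, mul_add, smul_mul_smul, trace_add, trace_smul, hDA, hAD,
    diagonal_mul_diagonal, trace_diagonal, smul_eq_mul, sq]
  ring

theorem trace_mul_self_eq_trace_subm {V : Type*} [Fintype V] [DecidableEq V]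
    {A : Matrix V V ℝ} {S : Finset V} (h : ∀ u v, u ∉ S → A u v * A v u = 0) :
    trace (A * A) = c2star A S := by
  have hS : ∀ x, x ∈ S ↔ x ∈ S := fun _ => Iff.rfl
  simp only [c2star, trace, diag_apply, mul_apply, subm, submatrix_apply]
  rw [← sum_subset (subset_univ S) fun u _ hu => sum_eq_zero fun v _ => h u v hu,
    sum_subtype S hS]
  refine sum_congr rfl fun u _ => ?_
  rw [← sum_subset (subset_univ S) fun v _ hv => by rw [mul_comm]; exact h v u hv,
    sum_subtype S hS]

def fiber {V : Type*} [Fintype V] [DecidableEq V] (r : V → V) (s : V) : Finset V :=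
  univ.filter (r · = s)

noncomputable def fiberOutdeg {V : Type*} [Fintype V] [DecidableEq V] (A : Matrix V V ℝ)
    (r : V → V) (v : V) : ℝ :=
  ∑ w ∈ fiber r (r v), A v w

@[simp]
theorem mem_fiber {V : Type*} [Fintype V] [DecidableEq V] {r : V → V} {s v : V} :
    v ∈ fiber r s ↔ r v = s := by
  simp [fiber]

section FiberGraph

variable {V : Type*} {A : Matrix V V ℝ} {r : V → V} {s : V}

theorem ite_fiberGraph_adj_eq_add (h01 : ∀ u v, A u v = 0 ∨ A u v = 1) (hloop : ∀ v, A v v = 0)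
    (hasymm : ∀ u v, r u = r v → A u v = 1 → A v u = 0) (u w : {v : V // r v = s})
    [Decidable ((fiberGraph A r s).Adj u w)] :
    (if (fiberGraph A r s).Adj u w then (1 : ℝ) else 0) = A u w + A w u := by
  by_cases huw : u = w
  · subst huw
    simp [fiberGraph, hloop]
  have hr : r u = r w := u.2.trans w.2.symm
  rcases h01 u w with h | h <;> rcases h01 w u with h' | h'
  all_goals simp_all [fiberGraph]

theorem sum_fiber_eq_card_edgeFinset [Fintype V] [DecidableEq V]
    (h01 : ∀ u v, A u v = 0 ∨ A u v = 1) (hloop : ∀ v, A v v = 0) (hasymm : ∀ u v, r u = r v → A u v = 1 → A v u = 0)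
    [DecidableRel (fiberGraph A r s).Adj] :
    ∑ v ∈ fiber r s, ∑ w ∈ fiber r s, A v w = #(fiberGraph A r s).edgeFinset := by
  have hmem : ∀ x, x ∈ fiber r s ↔ r x = s := fun _ => mem_fiber
  have htwice := congrArg (fun k : ℕ => (k : ℝ)) (fiberGraph A r s).sum_degrees_eq_twice_card_edges
  simp only [← SimpleGraph.card_neighborFinset_eq_degree, SimpleGraph.neighborFinset_eq_filter,
    Nat.cast_sum, Nat.cast_mul, ← sum_boole, ite_fiberGraph_adj_eq_add h01 hloop hasymm,
    sum_add_distrib] at htwice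
  simp_rw [sum_subtype (fiber r s) hmem]
  have hswap : ∑ u : {v // r v = s}, ∑ w : {v // r v = s}, A w u
      = ∑ u : {v // r v = s}, ∑ w : {v // r v = s}, A u w := sum_comm
  push_cast at htwice
  linarith

end FiberGraph

namespace IsGnm

variable {V : Type*} [Fintype V] [DecidableEq V] {A : Matrix V V ℝ} {S : Finset V} {r : V → V}
  {n m : ℕ}

theorem nonneg (hG : IsGnm A S r n m) (u v : V) : 0 ≤ A u v := by
  rcases hG.zero_one u v with h | h <;> simp [h]

theorem mul_swap_eq_zero_of_notMem (hG : IsGnm A S r n m) {u : V} (hu : u ∉ S) (v : V) :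
    A u v * A v u = 0 := by
  rcases hG.zero_one u v with h | h
  · simp [h]
  rcases hG.arc_cases u v h with ⟨hu', -⟩ | hr
  · exact absurd hu' hu
  · simp [hG.fiber_no_symm u v hr h]

theorem outdeg_eq_fiberOutdeg (hG : IsGnm A S r n m) {v : V} (hv : v ∉ S) :
    outdeg A v = fiberOutdeg A r v := by
  refine (sum_subset (subset_univ _) fun w _ hw => ?_).symm
  rcases hG.zero_one v w with h | h
  · exact h
  rcases hG.arc_cases v w h with ⟨hv', -⟩ | hr
  · exact absurd hv' hv
  · exact absurd (mem_fiber.2 hr.symm) hw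

theorem outdeg_eq_dStar_add_fiberOutdeg (hG : IsGnm A S r n m) {s : V} (hs : s ∈ S) :
    outdeg A s = dStar A S s + fiberOutdeg A r s := by
  have hrs : r s = s := hG.r_fix s hs
  have hinter : S ∩ fiber r s = {s} := by
    ext w
    simp only [mem_inter, mem_fiber, mem_singleton]
    exact ⟨fun ⟨hw, hrw⟩ => (hG.r_fix w hw).symm.trans hrw, by rintro rfl; exact ⟨hs, hrs⟩⟩
  have hunion : ∑ w ∈ S ∪ fiber r s, A s w = outdeg A s := by
    refine sum_subset (subset_univ _) fun w _ hw => ?_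
    rcases hG.zero_one s w with h | h
    · exact h
    rcases hG.arc_cases s w h with ⟨-, hw'⟩ | hr
    · exact absurd (mem_union_left _ hw') hw
    · exact absurd (mem_union_right _ (mem_fiber.2 (hr.symm.trans hrs))) hw
  have := sum_union_inter (s₁ := S) (s₂ := fiber r s) (f := (A s ·))
  rw [hunion, hinter, sum_singleton, hG.loopless, add_zero] at this
  rw [this, dStar, fiberOutdeg, hrs]

theorem sum_fiberOutdeg (hG : IsGnm A S r n m) {s : V} (hs : s ∈ S) :
    ∑ v ∈ fiber r s, fiberOutdeg A r v = fibCard r s - 1 := by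
  classical
  have hedges := (hG.fiber_tree s hs).card_edgeFinset
  rw [Fintype.card_subtype] at hedges
  rw [sum_congr rfl fun v hv => by rw [fiberOutdeg, mem_fiber.1 hv],
    sum_fiber_eq_card_edgeFinset hG.zero_one hG.loopless hG.fiber_no_symm, fibCard, ← hedges]
  push_cast
  ring

theorem one_le_dStar (hG : IsGnm A S r n m) {s : V} (hs : s ∈ S) : 1 ≤ dStar A S s := by
  obtain ⟨t, ht, hts⟩ := exists_mem_ne (hG.card_S ▸ hG.two_le_m) s
  rcases (hG.strong s hs t ht).cases_head with heq | ⟨b, ⟨-, hb, hsb⟩, -⟩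
  · exact absurd heq.symm hts
  · exact hsb ▸ single_le_sum (fun v _ => hG.nonneg s v) hb

theorem Ealpha_eq (hG : IsGnm A S r n m) (α : ℝ) :
    Ealpha α A = α ^ 2 * ∑ s ∈ S, ∑ v ∈ fiber r s, outdeg A v ^ 2 + (1 - α) ^ 2 * c2star A S := by
  rw [Ealpha_eq_of_loopless hG.loopless,
    trace_mul_self_eq_trace_subm fun u v hu => hG.mul_swap_eq_zero_of_notMem hu v]
  simp only [fiber, sum_fiberwise_of_maps_to (fun v _ => hG.r_mem v)]

theorem sum_sq_outdeg_fiber (hG : IsGnm A S r n m) {s : V} (hs : s ∈ S) :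
    ∑ v ∈ fiber r s, outdeg A v ^ 2
      = (dStar A S s + fiberOutdeg A r s) ^ 2
        + ∑ v ∈ (fiber r s).erase s, fiberOutdeg A r v ^ 2 := by
  have hsv : ∀ v ∈ (fiber r s).erase s, v ∉ S := fun v hv hvS =>
    ne_of_mem_erase hv ((hG.r_fix v hvS).symm.trans (mem_fiber.1 (mem_of_mem_erase hv)))
  rw [← add_sum_erase _ _ (mem_fiber.2 (hG.r_fix s hs)), hG.outdeg_eq_dStar_add_fiberOutdeg hs,
    sum_congr rfl fun v hv => by rw [hG.outdeg_eq_fiberOutdeg (hsv v hv)]]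

theorem dStar_add_fibCard_sub_one (hG : IsGnm A S r n m) {s : V} (hs : s ∈ S) :
    dStar A S s + fibCard r s - 1
      = dStar A S s + fiberOutdeg A r s + ∑ v ∈ (fiber r s).erase s, fiberOutdeg A r v := by
  rw [add_assoc, add_sum_erase _ _ (mem_fiber.2 (hG.r_fix s hs)), hG.sum_fiberOutdeg hs]
  ring

theorem fiberOutdeg_nonneg (hG : IsGnm A S r n m) (v : V) : 0 ≤ fiberOutdeg A r v :=
  sum_nonneg fun w _ => hG.nonneg v w

theorem sum_sq_outdeg_fiber_le (hG : IsGnm A S r n m) {s : V} (hs : s ∈ S) :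
    ∑ v ∈ fiber r s, outdeg A v ^ 2 ≤ (dStar A S s + fibCard r s - 1) ^ 2 := by
  rw [hG.sum_sq_outdeg_fiber hs, hG.dStar_add_fibCard_sub_one hs]
  exact sq_add_sum_sq_le_sq_add_sum _
    (add_nonneg (zero_le_one.trans (hG.one_le_dStar hs)) (hG.fiberOutdeg_nonneg s))
    fun v _ => hG.fiberOutdeg_nonneg v

theorem fiberOutdeg_eq_zero_iff (hG : IsGnm A S r n m) {v : V} :
    fiberOutdeg A r v = 0 ↔ ∀ w, r w = r v → A v w ≠ 1 := by
  rw [fiberOutdeg, sum_eq_zero_iff_of_nonneg fun w _ => hG.nonneg v w]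
  refine forall_congr' fun w => ?_
  rw [mem_fiber]
  rcases hG.zero_one v w with h | h <;> simp [h]

theorem sum_sq_outdeg_fiber_eq_iff (hG : IsGnm A S r n m) {s : V} (hs : s ∈ S) :
    ∑ v ∈ fiber r s, outdeg A v ^ 2 = (dStar A S s + fibCard r s - 1) ^ 2 ↔
      ∀ u v, r u = s → r v = s → A u v = 1 → u = s := by
  rw [hG.sum_sq_outdeg_fiber hs, hG.dStar_add_fibCard_sub_one hs,
    sq_add_sum_sq_eq_sq_add_sum_iff _
      (add_pos_of_pos_of_nonneg (zero_lt_one.trans_le (hG.one_le_dStar hs))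
        (hG.fiberOutdeg_nonneg s))
      fun v _ => hG.fiberOutdeg_nonneg v]
  simp only [mem_erase, mem_fiber, hG.fiberOutdeg_eq_zero_iff]
  constructor
  · intro h u v hu hv huv
    by_contra hus
    exact h u ⟨hus, hu⟩ v (hv.trans hu.symm) huv
  · rintro h u ⟨hus, hu⟩ v hv huv
    exact hus (h u v hu (hv.trans hu) huv)

end IsGnm

theorem stmt9_general {V : Type*} [Fintype V] [DecidableEq V] (A : Matrix V V ℝ) (S : Finset V)
    (r : V → V) (n m : ℕ) (hG : IsGnm A S r n m) (α : ℝ) :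
    Ealpha α A ≤
        α ^ 2 * ∑ s ∈ S, (dStar A S s + (fibCard r s : ℝ) - 1) ^ 2
          + (1 - α) ^ 2 * c2star A S ∧
    (0 < α →
      (Ealpha α A =
          α ^ 2 * ∑ s ∈ S, (dStar A S s + (fibCard r s : ℝ) - 1) ^ 2
            + (1 - α) ^ 2 * c2star A S ↔
        ∀ u v, r u = r v → A u v = 1 → u = r u)) := by
  rw [hG.Ealpha_eq]
  refine ⟨by gcongr with s hs; exact hG.sum_sq_outdeg_fiber_le hs, fun hα => ?_⟩
  rw [add_left_inj, mul_right_inj' (pow_pos hα 2).ne', sum_eq_sum_iff_of_le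
    fun s hs => hG.sum_sq_outdeg_fiber_le hs]
  refine ⟨fun h u v huv hA => ?_, fun h s hs => ?_⟩
  · exact (hG.sum_sq_outdeg_fiber_eq_iff (hG.r_mem u)).1 (h _ (hG.r_mem u)) u v rfl huv.symm hA
  · exact (hG.sum_sq_outdeg_fiber_eq_iff hs).2 fun u v hu hv hA =>
      hu ▸ h u v (hu.trans hv.symm) hA

/-- For `G ∈ 𝒢_n^m`, `E_α(G) ≤ α²·Σ_{s∈S}(d*(s)+n_s-1)² + (1-α)²·c₂(G*)`; for `0 < α < 1`
equality holds iff every arc inside a fiber has tail the root of the fiber, i.e. each hung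
tree is an out-star with centre its vertex of `S`. -/
theorem stmt9 {V : Type*} [Fintype V] [DecidableEq V] (A : Matrix V V ℝ) (S : Finset V)
    (r : V → V) (n m : ℕ) (hG : IsGnm A S r n m) (α : ℝ) (hα0 : 0 ≤ α) (hα1 : α < 1) :
    Ealpha α A ≤
        α ^ 2 * ∑ s ∈ S, (dStar A S s + (fibCard r s : ℝ) - 1) ^ 2
          + (1 - α) ^ 2 * c2star A S ∧
    (0 < α →
      (Ealpha α A =
          α ^ 2 * ∑ s ∈ S, (dStar A S s + (fibCard r s : ℝ) - 1) ^ 2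
            + (1 - α) ^ 2 * c2star A S ↔
        ∀ u v, r u = r v → A u v = 1 → u = r u)) :=
  stmt9_general A S r n m hG α
end

section
/- Let d₁ ≥ d₂ ≥ ⋯ ≥ d_m ≥ 0 be real numbers and let n₁,…,n_m be positive integers with Σ_{i=1}^m n_i = n. Then Σ_{i=1}^m (d_i+n_i−1)² ≤ (d₁+n−m)² + Σ_{i=2}^m d_i². Equality holds if and only if at most one index i satisfies n_i > 1, and every index i with n_i > 1 satisfies d_i = d₁. (Consequently, for the digraphs G', G'' ∈ 𝒢_n^m with the same strong component, obtained by hanging out-stars of sizes n₁,…,n_m at all vertices, respectively one out-star of size n−m+1 at a vertex of maximal outdegree, one has E_α(G'') ≥ E_α(G') with equality iff G' ≅ G''.) -/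
open Polynomial Matrix Finset

/-!
Write `eᵢ = nᵢ - 1 ≥ 0`, so that `Σ eᵢ = n - m`. The gap between the two sides is
`2 Σᵢ eᵢ (d₁ - dᵢ) + ((Σ eᵢ)² - Σ eᵢ²)`, a sum of two nonnegative quantities. The first vanishes
iff `dᵢ = d₁` whenever `eᵢ > 0`; the second equals `Σᵢ eᵢ (Σⱼ eⱼ - eᵢ)` and vanishes iff at most
one `eᵢ` is positive.
-/

namespace Finset

variable {ι R : Type*}

theorem sq_sum_sub_sum_sq [CommRing R] (s : Finset ι) (f : ι → R) :
    (∑ i ∈ s, f i) ^ 2 - ∑ i ∈ s, f i ^ 2 = ∑ i ∈ s, f i * (∑ j ∈ s, f j - f i) := by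
  simp only [mul_sub, sum_sub_distrib, ← sum_mul, sq]

theorem sum_sq_eq_sq_sum_iff_of_nonneg [CommRing R] [LinearOrder R] [IsStrictOrderedRing R]
    {s : Finset ι} {f : ι → R} (hf : ∀ i ∈ s, 0 ≤ f i) :
    ∑ i ∈ s, f i ^ 2 = (∑ i ∈ s, f i) ^ 2 ↔
      ∀ i ∈ s, ∀ j ∈ s, 0 < f i → 0 < f j → i = j := by
  classical
  have hle : ∀ i ∈ s, f i ≤ ∑ j ∈ s, f j := fun i hi ↦ single_le_sum hf hi
  rw [eq_comm, ← sub_eq_zero, sq_sum_sub_sum_sq,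
    sum_eq_zero_iff_of_nonneg fun i hi ↦ mul_nonneg (hf i hi) (sub_nonneg.2 (hle i hi))]
  constructor
  · intro h i hi j hj hfi hfj
    by_contra hij
    have hsum : f i = ∑ k ∈ s, f k := by
      simpa [hfi.ne', sub_eq_zero, eq_comm] using h i hi
    have hpair : f i + f j ≤ ∑ k ∈ s, f k := by
      rw [← sum_pair hij]
      exact sum_le_sum_of_subset_of_nonneg (by simp [insert_subset_iff, hi, hj])
        fun k hk _ ↦ hf k hk
    linarith
  · intro h i hi
    rcases (hf i hi).eq_or_lt with hfi | hfi
    · simp [← hfi]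
    · rw [sum_eq_single_of_mem i hi fun j hj hji ↦ ?_, sub_self, mul_zero]
      by_contra hfj
      exact hji (h j hj i hi ((hf j hj).lt_of_ne' hfj) hfi)

end Finset

section

variable {ι R : Type*} [Fintype ι] [DecidableEq ι] [CommRing R] (d e : ι → R) (i₀ : ι)

theorem sq_add_sum_add_sum_erase_sq :
    (d i₀ + ∑ i, e i) ^ 2 + ∑ i ∈ univ.erase i₀, d i ^ 2 =
      ∑ i, (d i + e i) ^ 2 +
        (2 * ∑ i, e i * (d i₀ - d i) + ((∑ i, e i) ^ 2 - ∑ i, e i ^ 2)) := by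
  have hterm : ∀ i, (d i + e i) ^ 2 + 2 * (e i * (d i₀ - d i)) =
      d i ^ 2 + e i ^ 2 + 2 * d i₀ * e i := fun i ↦ by ring
  rw [sum_erase_eq_sub (mem_univ _), mul_sum, ← add_assoc, ← sum_add_distrib,
    sum_congr rfl fun i _ ↦ hterm i, sum_add_distrib, sum_add_distrib, ← mul_sum]
  ring

variable [LinearOrder R] [IsStrictOrderedRing R] {d e i₀}

theorem sum_sq_add_le (hd : ∀ i, d i ≤ d i₀) (he : ∀ i, 0 ≤ e i) :
    ∑ i, (d i + e i) ^ 2 ≤ (d i₀ + ∑ i, e i) ^ 2 + ∑ i ∈ univ.erase i₀, d i ^ 2 := by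
  have hd' : 0 ≤ ∑ i, e i * (d i₀ - d i) :=
    sum_nonneg fun i _ ↦ mul_nonneg (he i) (sub_nonneg.2 (hd i))
  have he' : ∑ i, e i ^ 2 ≤ (∑ i, e i) ^ 2 := sum_sq_le_sq_sum_of_nonneg fun i _ ↦ he i
  rw [sq_add_sum_add_sum_erase_sq]
  linarith

theorem sum_sq_add_eq_iff (hd : ∀ i, d i ≤ d i₀) (he : ∀ i, 0 ≤ e i) :
    ∑ i, (d i + e i) ^ 2 = (d i₀ + ∑ i, e i) ^ 2 + ∑ i ∈ univ.erase i₀, d i ^ 2 ↔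
      (∀ i j, 0 < e i → 0 < e j → i = j) ∧ ∀ i, 0 < e i → d i = d i₀ := by
  have hterm : ∀ i ∈ univ, 0 ≤ e i * (d i₀ - d i) :=
    fun i _ ↦ mul_nonneg (he i) (sub_nonneg.2 (hd i))
  have he' : ∑ i, e i ^ 2 ≤ (∑ i, e i) ^ 2 := sum_sq_le_sq_sum_of_nonneg fun i _ ↦ he i
  rw [sq_add_sum_add_sum_erase_sq, left_eq_add,
    add_eq_zero_iff_of_nonneg (mul_nonneg zero_le_two (sum_nonneg hterm)) (sub_nonneg.2 he'),
    sub_eq_zero, eq_comm (a := (∑ i, e i) ^ 2), sum_sq_eq_sq_sum_iff_of_nonneg fun i _ ↦ he i,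
    mul_eq_zero, sum_eq_zero_iff_of_nonneg hterm, and_comm]
  simp only [two_ne_zero, false_or, mem_univ, true_implies, mul_eq_zero, sub_eq_zero]
  refine and_congr_right' (forall_congr' fun i ↦ ?_)
  rw [or_iff_not_imp_left, (he i).lt_iff_ne', eq_comm (a := d i₀)]

end

/-- For nonincreasing nonnegative reals `d₁ ≥ ⋯ ≥ d_m ≥ 0` and positive integers
`n₁,…,n_m` with `Σ nᵢ = n`, one has
`Σᵢ (dᵢ+nᵢ-1)² ≤ (d₁+n-m)² + Σ_{i≥2} dᵢ²`, with equality iff at most one index has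
`nᵢ > 1` and every such index satisfies `dᵢ = d₁`. -/
theorem stmt10 (m n : ℕ) (hm : 1 ≤ m) (d : Fin m → ℝ)
    (hmono : ∀ i j : Fin m, i ≤ j → d j ≤ d i)
    (nn : Fin m → ℕ) (hpos : ∀ i, 0 < nn i) (hsum : ∑ i, nn i = n) :
    (∑ i, (d i + (nn i : ℝ) - 1) ^ 2 ≤
        (d ⟨0, by omega⟩ + (n : ℝ) - m) ^ 2 +
          ∑ i ∈ Finset.univ.erase (⟨0, by omega⟩ : Fin m), (d i) ^ 2) ∧
    (∑ i, (d i + (nn i : ℝ) - 1) ^ 2 =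
        (d ⟨0, by omega⟩ + (n : ℝ) - m) ^ 2 +
          ∑ i ∈ Finset.univ.erase (⟨0, by omega⟩ : Fin m), (d i) ^ 2 ↔
      (∀ i j, 1 < nn i → 1 < nn j → i = j) ∧
        ∀ i, 1 < nn i → d i = d ⟨0, by omega⟩) := by
  set e : Fin m → ℝ := fun i ↦ (nn i : ℝ) - 1
  have he : ∀ i, 0 ≤ e i := fun i ↦ sub_nonneg.2 (Nat.one_le_cast.2 (hpos i))
  have hd : ∀ i, d i ≤ d ⟨0, by omega⟩ := fun i ↦ hmono _ i (Nat.zero_le _)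
  have hlhs : ∀ i, d i + (nn i : ℝ) - 1 = d i + e i := fun i ↦ add_sub_assoc _ _ _
  have hrhs : ∀ x : ℝ, x + n - m = x + ∑ i, e i := fun x ↦ by
    simp [e, sum_sub_distrib, ← hsum, add_sub_assoc]
  have hgt : ∀ i, 1 < nn i ↔ 0 < e i := fun i ↦ by simp [e]
  simp only [hlhs, hrhs, hgt]
  exact ⟨sum_sq_add_le hd he, sum_sq_add_eq_iff hd he⟩
end
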